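/- Let (X,d) be a metric space, M a nonempty proper closed subset of X, and F : X∖M → (0,∞) any (not necessarily Lipschitz) positive function. Then the function v defined by v(x,y) = 2·log((d(x,y) + max{F(x), F(y)}) / √(F(x)·F(y))) for x,y ∈ X∖M is a metric on X∖M. -/
import Mathlib


open Real Filter

/-- Generalized Ibragimov function. -/
noncomputable def vIb {X : Type*} [MetricSpace X] (F : X → ℝ) (x y : X) : ℝ :=
  2 * Real.log ((dist x y + max (F x) (F y)) / Real.sqrt (F x * F y))

lemma sqrt_mul_le_max {a b : ℝ} (ha : 0 < a) (hb : 0 < b) :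
    Real.sqrt (a * b) ≤ max a b := by
  have h : a * b ≤ (max a b) ^ 2 := by
    have h1 := le_max_left a b
    have h2 := le_max_right a b
    nlinarith
  calc Real.sqrt (a * b) ≤ Real.sqrt ((max a b) ^ 2) := Real.sqrt_le_sqrt h
    _ = max a b := Real.sqrt_sq (le_trans ha.le (le_max_left a b))

lemma one_le_ratio {X : Type*} [MetricSpace X] {F : X → ℝ} {x y : X}
    (ha : 0 < F x) (hb : 0 < F y) :
    1 ≤ (dist x y + max (F x) (F y)) / Real.sqrt (F x * F y) := by
  have hs : 0 < Real.sqrt (F x * F y) := Real.sqrt_pos.mpr (by positivity)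
  rw [le_div_iff₀ hs, one_mul]
  calc Real.sqrt (F x * F y) ≤ max (F x) (F y) := sqrt_mul_le_max ha hb
    _ ≤ dist x y + max (F x) (F y) := by linarith [dist_nonneg (x := x) (y := y)]

theorem stmt_14 {X : Type*} [MetricSpace X] (M : Set X)
    (hMclosed : IsClosed M) (hMne : M.Nonempty) (hMproper : M ≠ Set.univ)
    (F : X → ℝ) (hFpos : ∀ x ∉ M, 0 < F x) :
    (∀ x ∉ M, ∀ y ∉ M, 0 ≤ vIb F x y) ∧
    (∀ x ∉ M, ∀ y ∉ M, (vIb F x y = 0 ↔ x = y)) ∧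
    (∀ x ∉ M, ∀ y ∉ M, vIb F x y = vIb F y x) ∧
    (∀ x ∉ M, ∀ y ∉ M, ∀ z ∉ M, vIb F x y ≤ vIb F x z + vIb F z y) := by
  refine ⟨?_, ?_, ?_, ?_⟩
  · intro x hx y hy
    have h := one_le_ratio (hFpos x hx) (hFpos y hy)
    have := Real.log_nonneg h
    unfold vIb; linarith
  · intro x hx y hy
    have ha := hFpos x hx
    have hb := hFpos y hy
    constructor
    · intro h
      have h1 := one_le_ratio ha hb
      have hlog : Real.log ((dist x y + max (F x) (F y)) / Real.sqrt (F x * F y)) = 0 := by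
        unfold vIb at h; linarith
      have hr : (dist x y + max (F x) (F y)) / Real.sqrt (F x * F y) = 1 := by
        by_contra hne
        have hgt : 1 < (dist x y + max (F x) (F y)) / Real.sqrt (F x * F y) :=
          lt_of_le_of_ne h1 (Ne.symm hne)
        have := Real.log_pos hgt
        linarith
      have hs : 0 < Real.sqrt (F x * F y) := Real.sqrt_pos.mpr (by positivity)
      rw [div_eq_one_iff_eq hs.ne'] at hr
      have hsle : Real.sqrt (F x * F y) ≤ max (F x) (F y) := sqrt_mul_le_max ha hb
      have hd : dist x y ≤ 0 := by linarith
      exact dist_le_zero.mp hd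
    · intro h
      subst h
      unfold vIb
      rw [dist_self, max_self, zero_add, Real.sqrt_mul_self ha.le, div_self ha.ne',
        Real.log_one, mul_zero]
  · intro x hx y hy
    unfold vIb
    rw [dist_comm, max_comm, mul_comm (F x)]
  · intro x hx y hy z hz
    have ha := hFpos x hx
    have hb := hFpos y hy
    have hc := hFpos z hz
    set a := F x
    set b := F y
    set c := F z
    have hsab : 0 < Real.sqrt (a * b) := Real.sqrt_pos.mpr (by positivity)
    have hsac : 0 < Real.sqrt (a * c) := Real.sqrt_pos.mpr (by positivity)
    have hscb : 0 < Real.sqrt (c * b) := Real.sqrt_pos.mpr (by positivity)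
    have hA : 0 < (dist x z + max a c) / Real.sqrt (a * c) := by
      have := one_le_ratio (x := x) (y := z) ha hc
      linarith
    have hB : 0 < (dist z y + max c b) / Real.sqrt (c * b) := by
      have := one_le_ratio (x := z) (y := y) hc hb
      linarith
    unfold vIb
    rw [← mul_add, ← Real.log_mul hA.ne' hB.ne']
    have hprod : Real.sqrt (a * c) * Real.sqrt (c * b) = c * Real.sqrt (a * b) := by
      rw [← Real.sqrt_mul (by positivity), show a * c * (c * b) = c ^ 2 * (a * b) by ring,
        Real.sqrt_mul (by positivity), Real.sqrt_sq hc.le]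
    have hcore : c * (dist x y + max a b) ≤ (dist x z + max a c) * (dist z y + max c b) := by
      have hd : dist x y ≤ dist x z + dist z y := dist_triangle x z y
      have hp : 0 ≤ dist x z := dist_nonneg
      have hq : 0 ≤ dist z y := dist_nonneg
      have h1 : c ≤ max a c := le_max_right a c
      have h2 : c ≤ max c b := le_max_left c b
      have h3 : a ≤ max a c := le_max_left a c
      have h4 : b ≤ max c b := le_max_right c b
      rcases max_cases a b with ⟨hm, _⟩ | ⟨hm, _⟩ <;> rw [hm] <;>
        nlinarith [mul_nonneg hp hq, mul_le_mul h1 hq le_rfl (by linarith : (0:ℝ) ≤ max a c),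
          mul_le_mul h2 hp le_rfl (by linarith : (0:ℝ) ≤ max c b)]
    have hratio : (dist x y + max a b) / Real.sqrt (a * b) ≤
        (dist x z + max a c) / Real.sqrt (a * c) * ((dist z y + max c b) / Real.sqrt (c * b)) := by
      rw [div_mul_div_comm, hprod, div_le_div_iff₀ hsab (by positivity)]
      calc (dist x y + max a b) * (c * Real.sqrt (a * b))
          = (c * (dist x y + max a b)) * Real.sqrt (a * b) := by ring
        _ ≤ ((dist x z + max a c) * (dist z y + max c b)) * Real.sqrt (a * b) :=
            mul_le_mul_of_nonneg_right hcore hsab.le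
    have hpos : 0 < (dist x y + max a b) / Real.sqrt (a * b) := by
      have := one_le_ratio (x := x) (y := y) ha hb
      linarith
    have := Real.log_le_log hpos hratio
    linarith
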